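/- arXiv:1906.09604 — 4 statements merged into one kernel-verified Lean document; each statement's English description precedes it below -/
import Mathlib

section
/- Let (X,𝒳,μ) be a sigma-finite measure space, and for each x∈X let ξ(x,·):[0,∞)→ℝ be nondecreasing and right continuous with ξ(·,t) measurable for each t and μ-a.s. finite for t>0. Let T:X→[0,∞] be measurable with ∫∫_0^{T(x)} ξ(x,s)^- ds dμ < ∞. Fix α∈(0, μT) and λ∈ℝ, and set τ_λ(x)=inf{t: ξ(x,t)≥λ} ∧ T(x). If μτ_λ = α, then for every measurable τ with τ∈[0,T] μ-a.s. and μτ=α, one has μ∫_0^{τ_λ}ξ(s)ds ≤ μ∫_0^{τ}ξ(s)ds. -/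
/-
`λ` acts as a Lagrange multiplier. For each `x`, `ξ(x,·) - λ` is negative on `[0, τ_λ(x))` and
nonnegative on `[τ_λ(x), T(x))` (right continuity at `τ_λ(x)`). Hence for `τ ≤ T` we get
`∫_0^{τ_λ(x)} (ξ - λ) ≤ ∫_0^{τ(x)} (ξ - λ)` pointwise: the two integrals differ only between
`τ_λ(x)` and `τ(x)`, where the integrand has the right sign. Integrating in `x`, the terms
`λ μτ_λ = λ μτ = λα` cancel. Working with positive and negative parts in `[0, ∞]` throughout,
only the negative part of `ξ` has to be integrable.
-/

open Set MeasureTheory Filter Topology Function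
open scoped ENNReal

/-- The (possibly infinite) value `μ ∫_0^{τ(x)} ξ(x,s) ds`, as an extended real:
the `∫⁻` of the positive part minus the `∫⁻` of the negative part. -/
noncomputable def clearingObjective {X : Type*} [MeasurableSpace X] (μ : Measure X)
    (ξ : X → ℝ → ℝ) (τ : X → ℝ≥0∞) : EReal :=
  ((∫⁻ x, (∫⁻ s in {s : ℝ | 0 ≤ s ∧ ENNReal.ofReal s < τ x},
      ENNReal.ofReal (ξ x s)) ∂μ : ℝ≥0∞) : EReal) -
  ((∫⁻ x, (∫⁻ s in {s : ℝ | 0 ≤ s ∧ ENNReal.ofReal s < τ x},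
      ENNReal.ofReal (-(ξ x s))) ∂μ : ℝ≥0∞) : EReal)

lemma ENNReal.ofReal_add_ofReal_neg_le_of_le {a b : ℝ} (h : a ≤ b) :
    ENNReal.ofReal a + ENNReal.ofReal (-b) ≤ ENNReal.ofReal b + ENNReal.ofReal (-a) := by
  rcases le_total a 0 with ha | ha <;> rcases le_total b 0 with hb | hb <;>
    simp [ENNReal.ofReal_of_nonpos, ha, hb, h, le_neg.1]
  exact ⟨h.trans hb, ha.trans h⟩

lemma EReal.coe_ennreal_sub_le_coe_ennreal_sub {a b c d : ℝ≥0∞} (hd : d ≠ ⊤)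
    (h : a + d ≤ c + b) : (a : EReal) - b ≤ c - d := by
  rw [EReal.le_sub_iff_add_le (.inl (EReal.coe_ennreal_ne_bot d))
    (.inl (EReal.coe_ennreal_eq_top_iff.not.2 hd)), sub_eq_add_neg, add_right_comm,
    ← sub_eq_add_neg]
  exact EReal.sub_le_of_le_add (by exact_mod_cast h)

lemma setLIntegral_add_setLIntegral_le_of_sdiff {α : Type*} [MeasurableSpace α] {μ : Measure α}
    {g h : α → ℝ≥0∞} {A B : Set α} (hA : MeasurableSet A) (hB : MeasurableSet B)
    (hAB : ∀ x ∈ A \ B, g x ≤ h x) (hBA : ∀ x ∈ B \ A, h x ≤ g x) :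
    ∫⁻ x in A, g x ∂μ + ∫⁻ x in B, h x ∂μ ≤ ∫⁻ x in B, g x ∂μ + ∫⁻ x in A, h x ∂μ := by
  rw [← lintegral_inter_add_sdiff g A hB, ← lintegral_inter_add_sdiff h B hA,
    ← lintegral_inter_add_sdiff g B hA, ← lintegral_inter_add_sdiff h A hB, inter_comm B A]
  calc _ ≤ ∫⁻ x in A ∩ B, g x ∂μ + ∫⁻ x in A \ B, h x ∂μ +
        (∫⁻ x in A ∩ B, h x ∂μ + ∫⁻ x in B \ A, g x ∂μ) :=
        add_le_add (add_le_add le_rfl (setLIntegral_mono' (hA.diff hB) hAB))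
          (add_le_add le_rfl (setLIntegral_mono' (hB.diff hA) hBA))
    _ = _ := by ring

def icoZero (c : ℝ≥0∞) : Set ℝ := {s | 0 ≤ s ∧ ENNReal.ofReal s < c}

lemma measurableSet_icoZero (c : ℝ≥0∞) : MeasurableSet (icoZero c) :=
  measurableSet_Ici.inter (ENNReal.measurable_ofReal measurableSet_Iio)

lemma volume_icoZero (c : ℝ≥0∞) : volume (icoZero c) = c := by
  rcases eq_or_ne c ⊤ with rfl | hc
  · have : icoZero ⊤ = Ici 0 := by ext s; simp [icoZero]
    simp [this]
  · have : icoZero c = Ico 0 c.toReal := by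
      ext s
      simp only [icoZero, mem_ofPred_eq, mem_Ico, and_congr_right_iff]
      exact fun hs => ENNReal.ofReal_lt_iff_lt_toReal hs hc
    simp [this, hc]

lemma Measurable.setLIntegral_icoZero {X : Type*} [MeasurableSpace X] {g : X → ℝ → ℝ≥0∞}
    (hg : Measurable (uncurry g)) {τ : X → ℝ≥0∞} (hτ : Measurable τ) :
    Measurable fun x => ∫⁻ s in icoZero (τ x), g x s := by
  have hS : MeasurableSet {p : X × ℝ | p.2 ∈ icoZero (τ p.1)} :=
    (measurableSet_le measurable_const measurable_snd).inter
      (measurableSet_lt (ENNReal.measurable_ofReal.comp measurable_snd) (hτ.comp measurable_fst))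
  convert (hg.indicator hS).lintegral_prod_right' (ν := volume) using 2 with x
  rw [← lintegral_indicator (measurableSet_icoZero _)]
  rfl

lemma setLIntegral_icoZero_lagrangian_le {f : ℝ → ℝ} {lam : ℝ} {a b : ℝ≥0∞}
    (hbelow : ∀ s ∈ icoZero a, f s ≤ lam) (habove : ∀ s ∈ icoZero b \ icoZero a, lam ≤ f s) :
    (∫⁻ s in icoZero a, (ENNReal.ofReal (f s) + ENNReal.ofReal (-lam))) +
        ∫⁻ s in icoZero b, (ENNReal.ofReal lam + ENNReal.ofReal (-f s)) ≤
      (∫⁻ s in icoZero b, (ENNReal.ofReal (f s) + ENNReal.ofReal (-lam))) +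
        ∫⁻ s in icoZero a, (ENNReal.ofReal lam + ENNReal.ofReal (-f s)) :=
  setLIntegral_add_setLIntegral_le_of_sdiff (measurableSet_icoZero a) (measurableSet_icoZero b)
    (fun s hs => ENNReal.ofReal_add_ofReal_neg_le_of_le (hbelow s hs.1))
    (fun s hs => ENNReal.ofReal_add_ofReal_neg_le_of_le (habove s hs))

noncomputable def hitTime (f : ℝ → ℝ) (lam : ℝ) : ℝ≥0∞ :=
  sInf (ENNReal.ofReal '' {t : ℝ | 0 ≤ t ∧ lam ≤ f t})

lemma lt_of_ofReal_lt_hitTime {f : ℝ → ℝ} {lam s : ℝ} (hs : 0 ≤ s)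
    (h : ENNReal.ofReal s < hitTime f lam) : f s < lam :=
  lt_of_not_ge fun hle => h.not_ge (sInf_le ⟨s, ⟨hs, hle⟩, rfl⟩)

lemma le_of_hitTime_le_ofReal {f : ℝ → ℝ} (hmono : MonotoneOn f (Ici 0))
    (hrc : ∀ t ∈ Ici (0 : ℝ), ContinuousWithinAt f (Ici t) t) {lam s : ℝ} (hs : 0 ≤ s)
    (h : hitTime f lam ≤ ENNReal.ofReal s) : lam ≤ f s := by
  by_contra! hlt
  obtain ⟨u, hsu, hu⟩ : ∃ u ∈ Ioi s, Ico s u ⊆ {t | f t < lam} :=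
    mem_nhdsGE_iff_exists_Ico_subset.1 ((hrc s hs).eventually (gt_mem_nhds hlt))
  have hu_le : ENNReal.ofReal u ≤ hitTime f lam := by
    refine le_sInf ?_
    rintro _ ⟨t, ⟨ht0, ht⟩, rfl⟩
    refine ENNReal.ofReal_le_ofReal (le_of_not_gt fun htu => ht.not_gt ?_)
    rcases le_or_gt s t with hst | hts
    · exact hu ⟨hst, htu⟩
    · exact (hmono ht0 hs hts.le).trans_lt hlt
  exact ((ENNReal.ofReal_lt_ofReal_iff (hs.trans_lt hsu)).2 hsu).not_ge (hu_le.trans h)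

lemma le_of_mem_icoZero_min_hitTime {f : ℝ → ℝ} {lam s : ℝ} {T : ℝ≥0∞}
    (hs : s ∈ icoZero (min (hitTime f lam) T)) : f s ≤ lam :=
  (lt_of_ofReal_lt_hitTime hs.1 (hs.2.trans_le (min_le_left _ _))).le

lemma le_of_mem_icoZero_sdiff_min_hitTime {f : ℝ → ℝ} (hmono : MonotoneOn f (Ici 0))
    (hrc : ∀ t ∈ Ici (0 : ℝ), ContinuousWithinAt f (Ici t) t) {lam s : ℝ} {T b : ℝ≥0∞}
    (hb : b ≤ T) (hs : s ∈ icoZero b \ icoZero (min (hitTime f lam) T)) : lam ≤ f s := by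
  refine le_of_hitTime_le_ofReal hmono hrc hs.1.1 ?_
  have hle : min (hitTime f lam) T ≤ ENNReal.ofReal s := not_lt.1 fun h => hs.2 ⟨hs.1.1, h⟩
  exact (min_le_iff.1 hle).resolve_right (hs.1.2.trans_le hb).not_ge

lemma hitTime_eq_iInf_rat {f : ℝ → ℝ} (hmono : MonotoneOn f (Ici 0)) (lam : ℝ) :
    hitTime f lam = ⨅ q : ℚ, if 0 ≤ (q : ℝ) ∧ lam ≤ f q then ENNReal.ofReal q else ⊤ := by
  refine le_antisymm (le_iInf fun q => ?_) ?_
  · split_ifs with hq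
    exacts [sInf_le ⟨q, hq, rfl⟩, le_top]
  · refine le_sInf ?_
    rintro _ ⟨t, ⟨ht0, ht⟩, rfl⟩
    refine le_of_forall_gt fun c hc => ?_
    obtain ⟨r, -, htr, hrc⟩ := ENNReal.lt_iff_exists_real_btwn.1 hc
    obtain ⟨q, htq, hqr⟩ := exists_rat_btwn ((ENNReal.ofReal_lt_ofReal_iff'.1 htr).1)
    have hq0 : 0 ≤ (q : ℝ) := ht0.trans htq.le
    have hq : 0 ≤ (q : ℝ) ∧ lam ≤ f q := ⟨hq0, ht.trans (hmono ht0 hq0 htq.le)⟩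
    calc _ ≤ _ := iInf_le _ q
      _ = ENNReal.ofReal q := if_pos hq
      _ < c := (ENNReal.ofReal_le_ofReal hqr.le).trans_lt hrc

lemma measurable_hitTime {X : Type*} [MeasurableSpace X] {ξ : X → ℝ → ℝ}
    (hmeas : ∀ t, Measurable fun x => ξ x t) (hmono : ∀ x, MonotoneOn (ξ x) (Ici 0)) (lam : ℝ) :
    Measurable fun x => hitTime (ξ x) lam := by
  simp_rw [hitTime_eq_iInf_rat (hmono _)]
  exact .iInf fun q => .ite ((MeasurableSet.const _).inter
    (measurableSet_le measurable_const (hmeas q))) measurable_const measurable_const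

lemma tendsto_nat_ceil_mul_div_nhdsGE {a : ℝ} (ha : 0 ≤ a) :
    Tendsto (fun n : ℕ => (⌈a * n⌉₊ : ℝ) / n) atTop (𝓝[≥] a) := by
  refine tendsto_nhdsWithin_iff.2
    ⟨(tendsto_nat_ceil_mul_div_atTop ha).comp tendsto_natCast_atTop_atTop, ?_⟩
  filter_upwards [eventually_gt_atTop 0] with n hn
  exact (le_div_iff₀ (Nat.cast_pos.2 hn : (0 : ℝ) < n)).2 (Nat.le_ceil _)

/-- By right continuity, `ξ x (max s 0)` is the limit of its values at the grid points
`⌈n s⌉ / n` to the right of `s`, and on each grid it is measurable in `(x, s)`. -/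
lemma measurable_uncurry_comp_max_zero {X : Type*} [MeasurableSpace X] {ξ : X → ℝ → ℝ}
    (hmeas : ∀ t, Measurable fun x => ξ x t)
    (hrc : ∀ x, ∀ t ∈ Ici (0 : ℝ), ContinuousWithinAt (ξ x) (Ici t) t) :
    Measurable (uncurry fun x s => ξ x (max s 0)) := by
  refine measurable_of_tendsto_metrizable (f := fun (n : ℕ) (p : X × ℝ) =>
    ξ p.1 (⌈max p.2 0 * n⌉₊ / n)) (fun n => ?_) (tendsto_pi_nhds.2 fun p => ?_)
  · have hgrid : Measurable fun q : X × ℕ => ξ q.1 (q.2 / n) :=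
      measurable_from_prod_countable_left fun k => hmeas ((k : ℝ) / n)
    exact hgrid.comp (measurable_fst.prodMk
      (Nat.measurable_ceil.comp ((measurable_snd.max measurable_const).mul_const _)))
  · have ha : 0 ≤ max p.2 0 := le_max_right _ _
    exact (hrc p.1 _ ha).tendsto.comp (tendsto_nat_ceil_mul_div_nhdsGE ha)

section Objective

variable {X : Type*} [MeasurableSpace X] {μ : Measure X}

lemma clearingObjective_eq (ξ : X → ℝ → ℝ) (τ : X → ℝ≥0∞) :
    clearingObjective μ ξ τ =
      ((∫⁻ x, (∫⁻ s in icoZero (τ x), ENNReal.ofReal (ξ x s)) ∂μ : ℝ≥0∞) : EReal) -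
        ((∫⁻ x, (∫⁻ s in icoZero (τ x), ENNReal.ofReal (-ξ x s)) ∂μ : ℝ≥0∞) : EReal) :=
  rfl

lemma clearingObjective_congr {ξ ξ' : X → ℝ → ℝ} (h : ∀ x, EqOn (ξ x) (ξ' x) (Ici 0))
    (τ : X → ℝ≥0∞) : clearingObjective μ ξ τ = clearingObjective μ ξ' τ := by
  rw [clearingObjective_eq, clearingObjective_eq]
  congr 3 <;> funext x <;>
    exact setLIntegral_congr_fun (measurableSet_icoZero (τ x)) fun s hs => by rw [h x hs.1]

lemma clearingObjective_le_of_ae_lagrangian_le {ξ : X → ℝ → ℝ} (hξ : Measurable (uncurry ξ))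
    {σ τ : X → ℝ≥0∞} (hσ : Measurable σ) (hτ : Measurable τ) (hστ : ∫⁻ x, σ x ∂μ = ∫⁻ x, τ x ∂μ)
    (hτ_fin : ∫⁻ x, τ x ∂μ ≠ ⊤)
    (hτ_neg : ∫⁻ x, (∫⁻ s in icoZero (τ x), ENNReal.ofReal (-ξ x s)) ∂μ ≠ ⊤) (lam : ℝ)
    (h : ∀ᵐ x ∂μ,
      (∫⁻ s in icoZero (σ x), (ENNReal.ofReal (ξ x s) + ENNReal.ofReal (-lam))) +
          ∫⁻ s in icoZero (τ x), (ENNReal.ofReal lam + ENNReal.ofReal (-ξ x s)) ≤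
        (∫⁻ s in icoZero (τ x), (ENNReal.ofReal (ξ x s) + ENNReal.ofReal (-lam))) +
          ∫⁻ s in icoZero (σ x), (ENNReal.ofReal lam + ENNReal.ofReal (-ξ x s))) :
    clearingObjective μ ξ σ ≤ clearingObjective μ ξ τ := by
  have hpos : ∀ {ρ : X → ℝ≥0∞}, Measurable ρ →
      Measurable fun x => ∫⁻ s in icoZero (ρ x), ENNReal.ofReal (ξ x s) :=
    Measurable.setLIntegral_icoZero (g := fun x s => ENNReal.ofReal (ξ x s))
      (ENNReal.measurable_ofReal.comp hξ)
  simp only [lintegral_add_right _ measurable_const, lintegral_add_left measurable_const,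
    setLIntegral_const, volume_icoZero] at h
  have hintegrated := lintegral_mono_ae h
  rw [lintegral_add_left ((hpos hσ).fun_add (hσ.const_mul _)), lintegral_add_left (hpos hσ),
    lintegral_add_left (hτ.const_mul _), lintegral_add_left ((hpos hτ).fun_add (hτ.const_mul _)),
    lintegral_add_left (hpos hτ), lintegral_add_left (hσ.const_mul _)] at hintegrated
  simp only [lintegral_const_mul _ hσ, lintegral_const_mul _ hτ, hστ] at hintegrated
  have hcancel : ENNReal.ofReal (-lam) * ∫⁻ x, τ x ∂μ + ENNReal.ofReal lam * ∫⁻ x, τ x ∂μ ≠ ⊤ := by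
    finiteness
  rw [clearingObjective_eq, clearingObjective_eq]
  refine EReal.coe_ennreal_sub_le_coe_ennreal_sub hτ_neg
    (ENNReal.le_of_add_le_add_right hcancel ?_)
  convert hintegrated using 1 <;> ring

end Objective

theorem stmt4_general {X : Type*} [MeasurableSpace X] (μ : Measure X)
    (ξ : X → ℝ → ℝ)
    (hmeas : ∀ t : ℝ, Measurable fun x => ξ x t)
    (hmono : ∀ x, MonotoneOn (ξ x) (Set.Ici (0 : ℝ)))
    (hrc : ∀ x, ∀ t ∈ Set.Ici (0 : ℝ), ContinuousWithinAt (ξ x) (Set.Ici t) t)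
    (T : X → ℝ≥0∞) (hT : Measurable T)
    (hint : (∫⁻ x, (∫⁻ s in {s : ℝ | 0 ≤ s ∧ ENNReal.ofReal s ≤ T x},
        ENNReal.ofReal (-(ξ x s))) ∂μ) < ⊤)
    (α : ℝ)
    (lam : ℝ) (τlam : X → ℝ≥0∞)
    (hτlam : ∀ x, τlam x =
      min (sInf (ENNReal.ofReal '' {t : ℝ | 0 ≤ t ∧ lam ≤ ξ x t})) (T x))
    (hτlamα : ∫⁻ x, τlam x ∂μ = ENNReal.ofReal α) :
    ∀ τ : X → ℝ≥0∞, Measurable τ → (∀ᵐ x ∂μ, τ x ≤ T x) →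
      (∫⁻ x, τ x ∂μ) = ENNReal.ofReal α →
      clearingObjective μ ξ τlam ≤ clearingObjective μ ξ τ := by
  intro τ hτ hτT hτα
  obtain rfl := funext hτlam
  have hmax : ∀ x, ∀ s ∈ Ici (0 : ℝ), ξ x (max s 0) = ξ x s := fun x s hs => by
    rw [max_eq_left (mem_Ici.1 hs)]
  have hmod : ∀ x, EqOn (ξ x) (fun s => ξ x (max s 0)) (Ici 0) := fun x s hs =>
    (hmax x s hs).symm
  rw [clearingObjective_congr hmod, clearingObjective_congr hmod]
  refine clearingObjective_le_of_ae_lagrangian_le (measurable_uncurry_comp_max_zero hmeas hrc)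
    ((measurable_hitTime hmeas hmono lam).min hT) hτ (hτlamα.trans hτα.symm)
    (hτα ▸ ENNReal.ofReal_ne_top) ?_ lam ?_
  · refine ne_top_of_le_ne_top hint.ne (lintegral_mono_ae ?_)
    filter_upwards [hτT] with x hx
    calc _ = ∫⁻ s in icoZero (τ x), ENNReal.ofReal (-ξ x s) :=
          setLIntegral_congr_fun (measurableSet_icoZero _) fun s hs => by rw [hmax x s hs.1]
      _ ≤ _ := lintegral_mono_set fun s hs => by exact ⟨hs.1, hs.2.le.trans hx⟩
  · filter_upwards [hτT] with x hx
    exact setLIntegral_icoZero_lagrangian_le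
      (fun s hs => (hmax x s hs.1).trans_le (le_of_mem_icoZero_min_hitTime hs))
      (fun s hs => (le_of_mem_icoZero_sdiff_min_hitTime (hmono x) (hrc x) hx hs).trans_eq
        (hmax x s hs.1.1).symm)

/-- Theorem 1 (case `μτ_λ = α`): `τ_λ` solves the constrained minimization. -/
theorem stmt4 {X : Type*} [MeasurableSpace X] (μ : Measure X) [SigmaFinite μ]
    (ξ : X → ℝ → ℝ)
    (hmeas : ∀ t : ℝ, Measurable fun x => ξ x t)
    (hmono : ∀ x, MonotoneOn (ξ x) (Set.Ici (0 : ℝ)))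
    (hrc : ∀ x, ∀ t ∈ Set.Ici (0 : ℝ), ContinuousWithinAt (ξ x) (Set.Ici t) t)
    (T : X → ℝ≥0∞) (hT : Measurable T)
    (hint : (∫⁻ x, (∫⁻ s in {s : ℝ | 0 ≤ s ∧ ENNReal.ofReal s ≤ T x},
        ENNReal.ofReal (-(ξ x s))) ∂μ) < ⊤)
    (α : ℝ) (hα0 : 0 < α) (hαT : ENNReal.ofReal α < ∫⁻ x, T x ∂μ)
    (lam : ℝ) (τlam : X → ℝ≥0∞)
    (hτlam : ∀ x, τlam x =
      min (sInf (ENNReal.ofReal '' {t : ℝ | 0 ≤ t ∧ lam ≤ ξ x t})) (T x))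
    (hτlamα : ∫⁻ x, τlam x ∂μ = ENNReal.ofReal α) :
    ∀ τ : X → ℝ≥0∞, Measurable τ → (∀ᵐ x ∂μ, τ x ≤ T x) →
      (∫⁻ x, τ x ∂μ) = ENNReal.ofReal α →
      clearingObjective μ ξ τlam ≤ clearingObjective μ ξ τ :=
  stmt4_general μ ξ hmeas hmono hrc T hT hint α lam τlam hτlam hτlamα
end

section
/- In the setting of the previous statement, suppose λ∈ℝ satisfies μτ_λ < α < μτ_{λ+} with μτ_{λ+} < ∞, where τ_{λ+}(x)=inf{t: ξ(x,t)>λ}∧T(x). Let q = (α − μτ_λ)/(μτ_{λ+} − μτ_λ). Then σ := (1−q)τ_λ + q τ_{λ+} satisfies σ∈[0,T] μ-a.s., μσ = α, and μ∫_0^{σ}ξ(s)ds ≤ μ∫_0^{τ}ξ(s)ds for every measurable τ with τ∈[0,T] μ-a.s. and μτ = α. -/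
/-!
Since `τ_λ ≤ σ ≤ τ_{λ+}`, on every fibre `ξ(x, ·) ≤ λ` on `[0, σ)` and, by right continuity,
`ξ(x, ·) ≥ λ` on `[σ, T)`. Hence `∫₀^σ (ξ - λ) ≤ ∫₀^τ (ξ - λ)` for every `τ ≤ T`, and after
integrating in `x` the `λ`-terms cancel because `μσ = μτ = α`. To stay in `ℝ≥0∞` the inequality is
written with positive and negative parts; finiteness of the negative parts allows the subtraction
at the end. Right continuity also gives the joint measurability of `ξ` needed to integrate in `x`.
Feasibility of `σ` is the choice of `q`, which lies in `[0, 1]` and makes `μσ = α` by linearity.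
-/

open Set MeasureTheory Filter Topology
open scoped ENNReal

theorem measurable_uncurry_of_continuousWithinAt_Ici {X β : Type*} [MeasurableSpace X]
    [TopologicalSpace β] [TopologicalSpace.PseudoMetrizableSpace β] [MeasurableSpace β]
    [BorelSpace β] {u : X → ℝ → β} (hu_meas : ∀ t, Measurable fun x => u x t)
    (hu_rc : ∀ x t, ContinuousWithinAt (u x) (Ici t) t) :
    Measurable (Function.uncurry u) := by
  -- `t ↦ ⌈(n + 1) t⌉ / (n + 1)` has countable range and approaches `t` from the right
  let d : ℕ → ℝ → ℝ := fun n t => (⌈(n + 1 : ℝ) * t⌉ : ℝ) / (n + 1)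
  have hd_meas (n : ℕ) : Measurable fun p : X × ℝ => u p.1 (d n p.2) := by
    have hgrid : Measurable fun q : X × ℤ => u q.1 (q.2 / (n + 1)) :=
      measurable_from_prod_countable_left fun k => hu_meas (k / (n + 1))
    exact hgrid.comp (measurable_fst.prodMk (measurable_const.mul measurable_snd).ceil)
  have hd_tendsto (t : ℝ) : Tendsto (fun n => d n t) atTop (𝓝[≥] t) := by
    have hn (n : ℕ) : (0 : ℝ) < n + 1 := n.cast_add_one_pos
    have hle (n : ℕ) : t ≤ d n t := by
      rw [le_div_iff₀ (hn n), mul_comm]; exact Int.le_ceil _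
    have hlt (n : ℕ) : d n t ≤ t + 1 / (n + 1) := by
      rw [div_le_iff₀ (hn n)]
      calc (⌈(n + 1 : ℝ) * t⌉ : ℝ) ≤ (n + 1) * t + 1 := (Int.ceil_lt_add_one _).le
        _ = (t + 1 / (n + 1)) * (n + 1) := by field_simp
    refine tendsto_nhdsWithin_iff.2 ⟨?_, Eventually.of_forall hle⟩
    have hupper := tendsto_const_nhds (x := t).add tendsto_one_div_add_atTop_nhds_zero_nat
    rw [add_zero] at hupper
    exact tendsto_of_tendsto_of_tendsto_of_le_of_le tendsto_const_nhds hupper hle hlt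
  refine measurable_of_tendsto_metrizable hd_meas (tendsto_pi_nhds.2 fun p => ?_)
  exact (hu_rc p.1 p.2).tendsto.comp (hd_tendsto p.2)

theorem measurable_sInf_ofReal_image {X : Type*} [MeasurableSpace X] {S : X → Set ℝ}
    (hS : ∀ t, MeasurableSet {x | t ∈ S x}) (hup : ∀ x, ∀ t ∈ S x, ∀ u, t ≤ u → u ∈ S x) :
    Measurable fun x => sInf (ENNReal.ofReal '' S x) := by
  classical
  have hrat : (fun x => sInf (ENNReal.ofReal '' S x)) =
      fun x => ⨅ r : ℚ, if (r : ℝ) ∈ S x then ENNReal.ofReal r else ⊤ := by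
    funext x
    refine le_antisymm (le_iInf fun r => ?_) (le_sInf ?_)
    · split_ifs with hr
      exacts [sInf_le (mem_image_of_mem _ hr), le_top]
    · rintro _ ⟨t, ht, rfl⟩
      refine ENNReal.le_of_forall_pos_le_add fun ε hε _ => ?_
      obtain ⟨r, htr, hrε⟩ := exists_rat_btwn (lt_add_of_pos_right t hε)
      calc ⨅ r : ℚ, (if (r : ℝ) ∈ S x then ENNReal.ofReal r else ⊤)
          ≤ ENNReal.ofReal r := (iInf_le _ r).trans_eq (if_pos (hup x t ht r htr.le))
        _ ≤ ENNReal.ofReal (t + ε) := ENNReal.ofReal_le_ofReal hrε.le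
        _ ≤ ENNReal.ofReal t + ε := by
          rw [← ENNReal.ofReal_coe_nnreal]; exact ENNReal.ofReal_add_le
  rw [hrat]
  exact Measurable.iInf fun r => Measurable.ite (hS r) measurable_const measurable_const

theorem measurable_comp_max_zero {X : Type*} [MeasurableSpace X] {ξ : X → ℝ → ℝ}
    (hmeas : ∀ t, Measurable fun x => ξ x t)
    (hrc : ∀ x, ∀ t ∈ Ici (0 : ℝ), ContinuousWithinAt (ξ x) (Ici t) t) :
    Measurable fun p : X × ℝ => ξ p.1 (max p.2 0) :=
  measurable_uncurry_of_continuousWithinAt_Ici (u := fun x s => ξ x (max s 0))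
    (fun _ => hmeas _) fun x t => (hrc x _ (le_max_right t 0)).comp (f := fun s => max s 0)
      (continuous_id.max continuous_const).continuousWithinAt
      fun _ hs => mem_Ici.2 (max_le_max_right 0 hs)

theorem measurable_sInf_ofReal_image_of_monotoneOn {X : Type*} [MeasurableSpace X]
    {ξ : X → ℝ → ℝ} (hmeas : ∀ t, Measurable fun x => ξ x t)
    (hmono : ∀ x, MonotoneOn (ξ x) (Ici 0)) {P : Set ℝ} (hP : MeasurableSet P)
    (hP_mono : ∀ v w, v ≤ w → v ∈ P → w ∈ P) :
    Measurable fun x => sInf (ENNReal.ofReal '' {t | 0 ≤ t ∧ ξ x t ∈ P}) :=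
  measurable_sInf_ofReal_image (fun t => (MeasurableSet.const _).inter (hmeas t hP))
    fun x _ ht _ htu => ⟨ht.1.trans htu, hP_mono _ _ (hmono x ht.1 (ht.1.trans htu) htu) ht.2⟩

def Ico0 (c : ℝ≥0∞) : Set ℝ := {s | 0 ≤ s ∧ ENNReal.ofReal s < c}

theorem measurableSet_Ico0 (c : ℝ≥0∞) : MeasurableSet (Ico0 c) :=
  measurableSet_Ici.inter (ENNReal.measurable_ofReal measurableSet_Iio)

theorem volume_Ico0 (c : ℝ≥0∞) : volume (Ico0 c) = c := by
  rcases eq_or_ne c ⊤ with rfl | hc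
  · have : Ico0 ⊤ = Ici 0 := by ext s; simp [Ico0]
    rw [this, Real.volume_Ici]
  · have : Ico0 c = Ico 0 c.toReal := by
      ext s
      exact and_congr_right fun hs => ENNReal.ofReal_lt_iff_lt_toReal hs hc
    rw [this, Real.volume_Ico, sub_zero, ENNReal.ofReal_toReal hc]

theorem Ico0_mono {a b : ℝ≥0∞} (h : a ≤ b) : Ico0 a ⊆ Ico0 b :=
  fun _ hs => ⟨hs.1, hs.2.trans_le h⟩

theorem le_of_mem_Ico0_of_le_sInf {f : ℝ → ℝ} {lam : ℝ} {a : ℝ≥0∞}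
    (ha : a ≤ sInf (ENNReal.ofReal '' {t | 0 ≤ t ∧ lam < f t})) {s : ℝ} (hs : s ∈ Ico0 a) :
    f s ≤ lam := by
  by_contra! hlt
  exact (hs.2.trans_le ha).not_ge (sInf_le ⟨s, ⟨hs.1, hlt⟩, rfl⟩)

theorem le_of_mem_Ico0_diff_of_min_sInf_le {f : ℝ → ℝ} (hf : MonotoneOn f (Ici 0))
    (hrc : ∀ t ∈ Ici (0 : ℝ), ContinuousWithinAt f (Ici t) t) {lam : ℝ} {a b c : ℝ≥0∞}
    (ha : min (sInf (ENNReal.ofReal '' {t | 0 ≤ t ∧ lam ≤ f t})) c ≤ a) (hb : b ≤ c)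
    {s : ℝ} (hs : s ∈ Ico0 b \ Ico0 a) : lam ≤ f s := by
  obtain ⟨⟨hs0, hsb⟩, hsa⟩ := hs
  have hsa : a ≤ ENNReal.ofReal s := not_lt.1 fun h => hsa ⟨hs0, h⟩
  have hinf : sInf (ENNReal.ofReal '' {t | 0 ≤ t ∧ lam ≤ f t}) ≤ ENNReal.ofReal s :=
    (min_le_iff.1 (ha.trans hsa)).resolve_right (not_le.2 (hsb.trans_le hb))
  have hright (u : ℝ) (hsu : s < u) : lam ≤ f u := by
    have hu {p : ℝ} : ENNReal.ofReal p < ENNReal.ofReal u ↔ p < u :=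
      ENNReal.ofReal_lt_ofReal_iff (hs0.trans_lt hsu)
    obtain ⟨_, ⟨t, ⟨ht, hlam⟩, rfl⟩, htu⟩ := sInf_lt_iff.1 (hinf.trans_lt (hu.2 hsu))
    exact hlam.trans (hf ht (ht.trans (hu.1 htu).le) (hu.1 htu).le)
  exact ge_of_tendsto (((hrc s hs0).mono Ioi_subset_Ici_self).tendsto)
    (eventually_nhdsWithin_of_forall hright)

theorem setLIntegral_Ico0_add_const (f : ℝ → ℝ≥0∞) (k c : ℝ≥0∞) :
    ∫⁻ s in Ico0 c, (f s + k) = (∫⁻ s in Ico0 c, f s) + k * c := by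
  rw [lintegral_add_right _ measurable_const, setLIntegral_const, volume_Ico0]

theorem setLIntegral_add_le_add_of_subset {α : Type*} [MeasurableSpace α] {μ : Measure α}
    {A B : Set α} (hA : MeasurableSet A) (hB : MeasurableSet B) (hAB : A ⊆ B) {g h : α → ℝ≥0∞}
    (hgh : ∀ s ∈ B \ A, g s ≤ h s) :
    (∫⁻ s in A, h s ∂μ) + ∫⁻ s in B, g s ∂μ ≤ (∫⁻ s in B, h s ∂μ) + ∫⁻ s in A, g s ∂μ := by
  have hBA : B ∩ A = A := inter_eq_right.2 hAB
  rw [← lintegral_inter_add_sdiff g B hA, ← lintegral_inter_add_sdiff h B hA, hBA]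
  calc (∫⁻ s in A, h s ∂μ) + ((∫⁻ s in A, g s ∂μ) + ∫⁻ s in B \ A, g s ∂μ)
      ≤ (∫⁻ s in A, h s ∂μ) + ((∫⁻ s in A, g s ∂μ) + ∫⁻ s in B \ A, h s ∂μ) := by
        gcongr _ + (_ + ?_)
        exact setLIntegral_mono' (hB.diff hA) hgh
    _ = _ := by ring

/-- Positive-part form of `∫₀^a (f - lam) ≤ ∫₀^b (f - lam)` when `f ≤ lam` on `[0, a)` and
`lam ≤ f` on `[a, b)`. -/
theorem setLIntegral_Ico0_exchange {f : ℝ → ℝ} {lam : ℝ} {a b : ℝ≥0∞}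
    (hbelow : ∀ s ∈ Ico0 a, f s ≤ lam) (habove : ∀ s ∈ Ico0 b \ Ico0 a, lam ≤ f s) :
    (∫⁻ s in Ico0 a, ENNReal.ofReal (f s)) + ENNReal.ofReal (-lam) * a +
        ((∫⁻ s in Ico0 b, ENNReal.ofReal (-f s)) + ENNReal.ofReal lam * b) ≤
      (∫⁻ s in Ico0 b, ENNReal.ofReal (f s)) + ENNReal.ofReal (-lam) * b +
        ((∫⁻ s in Ico0 a, ENNReal.ofReal (-f s)) + ENNReal.ofReal lam * a) := by
  simp only [← setLIntegral_Ico0_add_const]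
  have hswap {v w : ℝ} (h : w ≤ v) :
      ENNReal.ofReal (-v) + ENNReal.ofReal w ≤ ENNReal.ofReal v + ENNReal.ofReal (-w) :=
    add_comm (ENNReal.ofReal v) _ ▸
      add_le_add (ENNReal.ofReal_le_ofReal (neg_le_neg h)) (ENNReal.ofReal_le_ofReal h)
  rcases le_total a b with hab | hba
  · exact setLIntegral_add_le_add_of_subset (measurableSet_Ico0 a) (measurableSet_Ico0 b)
      (Ico0_mono hab) fun s hs => hswap (habove s hs)
  · have hneg := setLIntegral_add_le_add_of_subset (μ := volume) (measurableSet_Ico0 b)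
      (measurableSet_Ico0 a) (Ico0_mono hba)
      (g := fun s => ENNReal.ofReal (f s) + ENNReal.ofReal (-lam))
      (h := fun s => ENNReal.ofReal (-f s) + ENNReal.ofReal lam) fun s hs => by
        rw [add_comm, add_comm (ENNReal.ofReal (-f s))]
        exact hswap (hbelow s hs.1)
    exact (add_comm _ _).trans_le (hneg.trans_eq (add_comm _ _))

theorem EReal.coe_ennreal_sub_le_sub_of_add_le {a b c d : ℝ≥0∞} (hb : b ≠ ⊤) (hd : d ≠ ⊤)
    (h : a + d ≤ c + b) : (a : EReal) - b ≤ c - d := by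
  rcases eq_or_ne c ⊤ with rfl | hc
  · lift d to NNReal using hd
    simp [EReal.coe_nnreal_eq_coe_real]
  have ha : a ≠ ⊤ := ne_top_of_le_ne_top (ENNReal.add_ne_top.2 ⟨hc, hb⟩) (le_self_add.trans h)
  lift a to NNReal using ha
  lift b to NNReal using hb
  lift c to NNReal using hc
  lift d to NNReal using hd
  simp only [EReal.coe_nnreal_eq_coe_real, ← EReal.coe_sub, EReal.coe_le_coe_iff]
  have h' : (a : ℝ) + d ≤ c + b := by exact_mod_cast h
  linarith

noncomputable def posPartIntegral {X : Type*} [MeasurableSpace X] (μ : Measure X)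
    (ξ : X → ℝ → ℝ) (τ : X → ℝ≥0∞) : ℝ≥0∞ :=
  ∫⁻ x, (∫⁻ s in Ico0 (τ x), ENNReal.ofReal (ξ x s)) ∂μ

theorem clearingObjective_eq_s5 {X : Type*} [MeasurableSpace X] (μ : Measure X)
    (ξ : X → ℝ → ℝ) (τ : X → ℝ≥0∞) :
    clearingObjective μ ξ τ = posPartIntegral μ ξ τ - posPartIntegral μ (fun x s => -ξ x s) τ :=
  rfl

theorem posPartIntegral_le_of_ae_le {X : Type*} [MeasurableSpace X] {μ : Measure X}
    {ξ : X → ℝ → ℝ} {τ T : X → ℝ≥0∞} (h : ∀ᵐ x ∂μ, τ x ≤ T x) :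
    posPartIntegral μ ξ τ ≤
      ∫⁻ x, (∫⁻ s in {s : ℝ | 0 ≤ s ∧ ENNReal.ofReal s ≤ T x}, ENNReal.ofReal (ξ x s)) ∂μ := by
  refine lintegral_mono_ae ?_
  filter_upwards [h] with x hx
  exact lintegral_mono_set fun s hs => ⟨hs.1, (hs.2.trans_le hx).le⟩

theorem measurable_setLIntegral_Ico0 {X : Type*} [MeasurableSpace X] {ξ : X → ℝ → ℝ}
    (hξ : Measurable fun p : X × ℝ => ξ p.1 (max p.2 0)) {τ : X → ℝ≥0∞} (hτ : Measurable τ) :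
    Measurable fun x => ∫⁻ s in Ico0 (τ x), ENNReal.ofReal (ξ x s) := by
  have hset : MeasurableSet {p : X × ℝ | p.2 ∈ Ico0 (τ p.1)} :=
    (measurableSet_le measurable_const measurable_snd).inter
      (measurableSet_lt (ENNReal.measurable_ofReal.comp measurable_snd) (hτ.comp measurable_fst))
  have hind (x : X) : ∫⁻ s in Ico0 (τ x), ENNReal.ofReal (ξ x s) = ∫⁻ s,
      {p : X × ℝ | p.2 ∈ Ico0 (τ p.1)}.indicator (fun p => ENNReal.ofReal (ξ p.1 (max p.2 0)))
        (x, s) := by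
    rw [← lintegral_indicator (measurableSet_Ico0 _)]
    congr 1 with s
    by_cases hs : s ∈ Ico0 (τ x)
    · simp [indicator, hs, max_eq_left hs.1]
    · simp [indicator, hs]
  simp_rw [hind]
  exact (hξ.ennreal_ofReal.indicator hset).lintegral_prod_right'

theorem clearingObjective_le_of_threshold {X : Type*} [MeasurableSpace X] {μ : Measure X}
    {ξ : X → ℝ → ℝ} (hξ : Measurable fun p : X × ℝ => ξ p.1 (max p.2 0))
    {σ τ : X → ℝ≥0∞} (hσ : Measurable σ) (hτ : Measurable τ)
    (hστ : ∫⁻ x, σ x ∂μ = ∫⁻ x, τ x ∂μ) (hτ_fin : ∫⁻ x, τ x ∂μ ≠ ⊤)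
    (hσ_neg : posPartIntegral μ (fun x s => -ξ x s) σ ≠ ⊤)
    (hτ_neg : posPartIntegral μ (fun x s => -ξ x s) τ ≠ ⊤) {lam : ℝ}
    (hbelow : ∀ᵐ x ∂μ, ∀ s ∈ Ico0 (σ x), ξ x s ≤ lam)
    (habove : ∀ᵐ x ∂μ, ∀ s ∈ Ico0 (τ x) \ Ico0 (σ x), lam ≤ ξ x s) :
    clearingObjective μ ξ σ ≤ clearingObjective μ ξ τ := by
  set c := ENNReal.ofReal (-lam) * ∫⁻ x, τ x ∂μ + ENNReal.ofReal lam * ∫⁻ x, τ x ∂μ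
  have hc : c ≠ ⊤ := by finiteness
  have hsplit (η : X → ℝ → ℝ) {ρ : X → ℝ≥0∞} (hρ : Measurable ρ) (k : ℝ≥0∞) :
      ∫⁻ x, (∫⁻ s in Ico0 (ρ x), ENNReal.ofReal (η x s)) + k * ρ x ∂μ =
        posPartIntegral μ η ρ + k * ∫⁻ x, ρ x ∂μ := by
    rw [lintegral_add_right _ (hρ.const_mul k), lintegral_const_mul k hρ, posPartIntegral]
  have key : posPartIntegral μ ξ σ + posPartIntegral μ (fun x s => -ξ x s) τ + c ≤
      posPartIntegral μ ξ τ + posPartIntegral μ (fun x s => -ξ x s) σ + c := calc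
    _ = (∫⁻ x, (∫⁻ s in Ico0 (σ x), ENNReal.ofReal (ξ x s)) + ENNReal.ofReal (-lam) * σ x ∂μ) +
        ∫⁻ x, (∫⁻ s in Ico0 (τ x), ENNReal.ofReal (-ξ x s)) + ENNReal.ofReal lam * τ x ∂μ := by
      rw [hsplit ξ hσ, hsplit (fun x s => -ξ x s) hτ, hστ]; ring
    _ ≤ ∫⁻ x, (∫⁻ s in Ico0 (σ x), ENNReal.ofReal (ξ x s)) + ENNReal.ofReal (-lam) * σ x +
        ((∫⁻ s in Ico0 (τ x), ENNReal.ofReal (-ξ x s)) + ENNReal.ofReal lam * τ x) ∂μ :=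
      le_lintegral_add _ _
    _ ≤ ∫⁻ x, (∫⁻ s in Ico0 (τ x), ENNReal.ofReal (ξ x s)) + ENNReal.ofReal (-lam) * τ x +
        ((∫⁻ s in Ico0 (σ x), ENNReal.ofReal (-ξ x s)) + ENNReal.ofReal lam * σ x) ∂μ := by
      refine lintegral_mono_ae ?_
      filter_upwards [hbelow, habove] with x hbelow habove
      exact setLIntegral_Ico0_exchange hbelow habove
    _ = (∫⁻ x, (∫⁻ s in Ico0 (τ x), ENNReal.ofReal (ξ x s)) + ENNReal.ofReal (-lam) * τ x ∂μ) +
        ∫⁻ x, (∫⁻ s in Ico0 (σ x), ENNReal.ofReal (-ξ x s)) + ENNReal.ofReal lam * σ x ∂μ :=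
      lintegral_add_left ((measurable_setLIntegral_Ico0 hξ hτ).add (hτ.const_mul _)) _
    _ = _ := by rw [hsplit ξ hτ, hsplit (fun x s => -ξ x s) hσ, hστ]; ring
  rw [clearingObjective_eq_s5, clearingObjective_eq_s5]
  exact EReal.coe_ennreal_sub_le_sub_of_add_le hσ_neg hτ_neg
    ((ENNReal.add_le_add_iff_right hc).1 key)

theorem ENNReal.ofReal_one_sub_mul_add_mem_Icc {a b : ℝ≥0∞} (hab : a ≤ b) {q : ℝ} (hq0 : 0 ≤ q)
    (hq1 : q ≤ 1) : ENNReal.ofReal (1 - q) * a + ENNReal.ofReal q * b ∈ Icc a b := by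
  have hsum : ENNReal.ofReal (1 - q) + ENNReal.ofReal q = 1 := by
    rw [← ENNReal.ofReal_add (by linarith) hq0, sub_add_cancel, ENNReal.ofReal_one]
  constructor
  · calc a = ENNReal.ofReal (1 - q) * a + ENNReal.ofReal q * a := by rw [← add_mul, hsum, one_mul]
      _ ≤ _ := by gcongr
  · calc _ ≤ ENNReal.ofReal (1 - q) * b + ENNReal.ofReal q * b := by gcongr
      _ = b := by rw [← add_mul, hsum, one_mul]

theorem ENNReal.ofReal_one_sub_mul_add_ofReal_mul_eq {a b : ℝ≥0∞} (ha : a ≠ ⊤) (hb : b ≠ ⊤)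
    (hab : a.toReal ≠ b.toReal) {q α : ℝ} (hq : q = (α - a.toReal) / (b.toReal - a.toReal))
    (hq0 : 0 ≤ q) (hq1 : q ≤ 1) :
    ENNReal.ofReal (1 - q) * a + ENNReal.ofReal q * b = ENNReal.ofReal α := by
  have hab' : b.toReal - a.toReal ≠ 0 := sub_ne_zero.2 hab.symm
  rw [← ENNReal.ofReal_toReal ha, ← ENNReal.ofReal_toReal hb,
    ← ENNReal.ofReal_mul (by linarith), ← ENNReal.ofReal_mul hq0,
    ← ENNReal.ofReal_add (by positivity) (by positivity), hq]
  congr 1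
  field_simp
  ring

theorem stmt5_general {X : Type*} [MeasurableSpace X] (μ : Measure X)
    (ξ : X → ℝ → ℝ)
    (hmeas : ∀ t : ℝ, Measurable fun x => ξ x t)
    (hmono : ∀ x, MonotoneOn (ξ x) (Set.Ici (0 : ℝ)))
    (hrc : ∀ x, ∀ t ∈ Set.Ici (0 : ℝ), ContinuousWithinAt (ξ x) (Set.Ici t) t)
    (T : X → ℝ≥0∞) (hT : Measurable T)
    (hint : (∫⁻ x, (∫⁻ s in {s : ℝ | 0 ≤ s ∧ ENNReal.ofReal s ≤ T x},
        ENNReal.ofReal (-(ξ x s))) ∂μ) < ⊤)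
    (α : ℝ) (hα0 : 0 < α)
    (lam : ℝ) (τlam τplus : X → ℝ≥0∞)
    (hτlam : ∀ x, τlam x =
      min (sInf (ENNReal.ofReal '' {t : ℝ | 0 ≤ t ∧ lam ≤ ξ x t})) (T x))
    (hτplus : ∀ x, τplus x =
      min (sInf (ENNReal.ofReal '' {t : ℝ | 0 ≤ t ∧ lam < ξ x t})) (T x))
    (h1 : (∫⁻ x, τlam x ∂μ) < ENNReal.ofReal α)
    (h2 : ENNReal.ofReal α < ∫⁻ x, τplus x ∂μ)
    (h3 : (∫⁻ x, τplus x ∂μ) < ⊤)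
    (q : ℝ)
    (hq : q = (α - (∫⁻ x, τlam x ∂μ).toReal) /
      ((∫⁻ x, τplus x ∂μ).toReal - (∫⁻ x, τlam x ∂μ).toReal))
    (σ : X → ℝ≥0∞)
    (hσ : ∀ x, σ x = ENNReal.ofReal (1 - q) * τlam x + ENNReal.ofReal q * τplus x) :
    (∀ᵐ x ∂μ, σ x ≤ T x) ∧ (∫⁻ x, σ x ∂μ) = ENNReal.ofReal α ∧
    ∀ τ : X → ℝ≥0∞, Measurable τ → (∀ᵐ x ∂μ, τ x ≤ T x) →
      (∫⁻ x, τ x ∂μ) = ENNReal.ofReal α →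
      clearingObjective μ ξ σ ≤ clearingObjective μ ξ τ := by
  have hτlam_meas : Measurable τlam := funext hτlam ▸
    (measurable_sInf_ofReal_image_of_monotoneOn hmeas hmono measurableSet_Ici
      fun _ _ h h' => le_trans h' h).min hT
  have hτplus_meas : Measurable τplus := funext hτplus ▸
    (measurable_sInf_ofReal_image_of_monotoneOn hmeas hmono measurableSet_Ioi
      fun _ _ h h' => lt_of_lt_of_le h' h).min hT
  have hτlam_le (x : X) : τlam x ≤ τplus x := by
    rw [hτlam, hτplus]
    exact min_le_min_right _ (sInf_le_sInf (image_mono fun t ht => ⟨ht.1, ht.2.le⟩))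
  have hA : (∫⁻ x, τlam x ∂μ).toReal < α := ENNReal.toReal_lt_of_lt_ofReal h1
  have hB : α < (∫⁻ x, τplus x ∂μ).toReal := (ENNReal.ofReal_lt_iff_lt_toReal hα0.le h3.ne).1 h2
  have hq0 : 0 ≤ q := hq ▸ div_nonneg (by linarith) (by linarith)
  have hq1 : q ≤ 1 := hq ▸ (div_le_one (by linarith)).2 (by linarith)
  have hσ_mem (x : X) : σ x ∈ Icc (τlam x) (τplus x) :=
    hσ x ▸ ENNReal.ofReal_one_sub_mul_add_mem_Icc (hτlam_le x) hq0 hq1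
  have hσT (x : X) : σ x ≤ T x := (hσ_mem x).2.trans (hτplus x ▸ min_le_right _ _)
  have hσ_meas : Measurable σ := funext hσ ▸ (hτlam_meas.const_mul _).add (hτplus_meas.const_mul _)
  have hσ_int : ∫⁻ x, σ x ∂μ = ENNReal.ofReal α := by
    rw [lintegral_congr hσ, lintegral_add_left (hτlam_meas.const_mul _),
      lintegral_const_mul _ hτlam_meas, lintegral_const_mul _ hτplus_meas]
    exact ENNReal.ofReal_one_sub_mul_add_ofReal_mul_eq h1.ne_top h3.ne (by linarith) hq hq0 hq1
  refine ⟨.of_forall hσT, hσ_int, fun τ hτ hτT hτ_int => ?_⟩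
  have hneg_fin {ρ : X → ℝ≥0∞} (hρ : ∀ᵐ x ∂μ, ρ x ≤ T x) :
      posPartIntegral μ (fun x s => -ξ x s) ρ ≠ ⊤ :=
    ((posPartIntegral_le_of_ae_le hρ).trans_lt hint).ne
  exact clearingObjective_le_of_threshold (measurable_comp_max_zero hmeas hrc) hσ_meas hτ
    (hσ_int.trans hτ_int.symm) (hτ_int ▸ ENNReal.ofReal_ne_top) (hneg_fin (.of_forall hσT))
    (hneg_fin hτT) (.of_forall fun x _ => le_of_mem_Ico0_of_le_sInf
      ((hσ_mem x).2.trans (hτplus x ▸ min_le_left _ _)))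
    (hτT.mono fun x hx _ => le_of_mem_Ico0_diff_of_min_sInf_le (hmono x) (hrc x)
      (hτlam x ▸ (hσ_mem x).1) hx)

/-- Theorem 1 (case `μτ_λ < α < μτ_{λ+} < ∞`): the convex combination
`(1−q) τ_λ + q τ_{λ+}` is feasible and optimal. -/
theorem stmt5 {X : Type*} [MeasurableSpace X] (μ : Measure X) [SigmaFinite μ]
    (ξ : X → ℝ → ℝ)
    (hmeas : ∀ t : ℝ, Measurable fun x => ξ x t)
    (hmono : ∀ x, MonotoneOn (ξ x) (Set.Ici (0 : ℝ)))
    (hrc : ∀ x, ∀ t ∈ Set.Ici (0 : ℝ), ContinuousWithinAt (ξ x) (Set.Ici t) t)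
    (T : X → ℝ≥0∞) (hT : Measurable T)
    (hint : (∫⁻ x, (∫⁻ s in {s : ℝ | 0 ≤ s ∧ ENNReal.ofReal s ≤ T x},
        ENNReal.ofReal (-(ξ x s))) ∂μ) < ⊤)
    (α : ℝ) (hα0 : 0 < α) (hαT : ENNReal.ofReal α < ∫⁻ x, T x ∂μ)
    (lam : ℝ) (τlam τplus : X → ℝ≥0∞)
    (hτlam : ∀ x, τlam x =
      min (sInf (ENNReal.ofReal '' {t : ℝ | 0 ≤ t ∧ lam ≤ ξ x t})) (T x))
    (hτplus : ∀ x, τplus x =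
      min (sInf (ENNReal.ofReal '' {t : ℝ | 0 ≤ t ∧ lam < ξ x t})) (T x))
    (h1 : (∫⁻ x, τlam x ∂μ) < ENNReal.ofReal α)
    (h2 : ENNReal.ofReal α < ∫⁻ x, τplus x ∂μ)
    (h3 : (∫⁻ x, τplus x ∂μ) < ⊤)
    (q : ℝ)
    (hq : q = (α - (∫⁻ x, τlam x ∂μ).toReal) /
      ((∫⁻ x, τplus x ∂μ).toReal - (∫⁻ x, τlam x ∂μ).toReal))
    (σ : X → ℝ≥0∞)
    (hσ : ∀ x, σ x = ENNReal.ofReal (1 - q) * τlam x + ENNReal.ofReal q * τplus x) :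
    (∀ᵐ x ∂μ, σ x ≤ T x) ∧ (∫⁻ x, σ x ∂μ) = ENNReal.ofReal α ∧
    ∀ τ : X → ℝ≥0∞, Measurable τ → (∀ᵐ x ∂μ, τ x ≤ T x) →
      (∫⁻ x, τ x ∂μ) = ENNReal.ofReal α →
      clearingObjective μ ξ σ ≤ clearingObjective μ ξ τ :=
  stmt5_general μ ξ hmeas hmono hrc T hT hint α hα0 lam τlam τplus hτlam hτplus h1 h2 h3 q hq σ hσ
end

section
/- Let ψ:[0,∞)→ℝ be strictly convex and continuous, and let T be a nonnegative random variable with finite positive mean and distribution F. Define the equilibrium distribution F_e(t) = (1/ET)∫_0^t(1−F(s))ds. Then for every p∈(0,1), the random variable τ_p = F_e^{-1}(p) ∧ T minimizes Eψ(τ) over all random variables τ with τ∈[0,T] a.s. and Eτ = p·ET. -/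
/-!
Let `c` be the `p`-quantile of `F_e`. By the layer-cake formula `E[c ∧ T] = ∫₀ᶜ (1 - F) = p E[T]`,
so `τ_p` is admissible. With `s` the right derivative of `ψ` at `c`, convexity gives the pointwise
bound `ψ(τ) ≥ ψ(c ∧ T) + s (τ - c ∧ T)` whenever `0 ≤ τ ≤ T`: for `T ≥ c` it is the supporting
line at `c`, and for `T < c` the chord slope of `ψ` on `[τ, T]` is at most `s`. Taking
expectations, the linear term vanishes because `E[τ] = E[c ∧ T]`.
-/

open Set MeasureTheory ProbabilityTheory
open scoped ENNReal

/-- The (possibly infinite) expectation `E[ψ(τ)]` as an extended real. -/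
noncomputable def eExp {Ω : Type*} [MeasurableSpace Ω] (P : Measure Ω)
    (f : Ω → ℝ) : EReal :=
  ((∫⁻ ω, ENNReal.ofReal (f ω) ∂P : ℝ≥0∞) : EReal) -
  ((∫⁻ ω, ENNReal.ofReal (-(f ω)) ∂P : ℝ≥0∞) : EReal)

open Filter Topology

namespace ConvexOn

variable {S : Set ℝ} {f : ℝ → ℝ} {c x y : ℝ}

theorem slope_le_rightDeriv_of_mem_interior (hf : ConvexOn ℝ S f) (hx : x ∈ S)
    (hc : c ∈ interior S) (hxy : x < y) (hyc : y ≤ c) :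
    slope f x y ≤ derivWithin f (Ioi c) c :=
  calc slope f x y ≤ slope f x c :=
        hf.slope_mono hx ⟨hf.1.ordConnected.out hx (interior_subset hc) ⟨hxy.le, hyc⟩, hxy.ne'⟩
          ⟨interior_subset hc, (hxy.trans_le hyc).ne'⟩ hyc
    _ ≤ derivWithin f (Iio c) c := hf.slope_le_leftDeriv_of_mem_interior hx hc (hxy.trans_le hyc)
    _ ≤ derivWithin f (Ioi c) c := hf.leftDeriv_le_rightDeriv_of_mem_interior hc

theorem add_rightDeriv_mul_sub_le (hf : ConvexOn ℝ S f) (hc : c ∈ interior S) (hx : x ∈ S) :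
    f c + derivWithin f (Ioi c) c * (x - c) ≤ f x := by
  rcases lt_trichotomy x c with hxc | rfl | hcx
  · have := hf.slope_le_rightDeriv_of_mem_interior hx hc hxc le_rfl
    rw [slope_def_field, div_le_iff₀ (sub_pos.mpr hxc)] at this
    linarith
  · simp
  · have := hf.rightDeriv_le_slope_of_mem_interior hc hx hcx
    rw [slope_def_field, le_div_iff₀ (sub_pos.mpr hcx)] at this
    linarith

theorem add_rightDeriv_mul_sub_min_le (hf : ConvexOn ℝ S f) (hc : c ∈ interior S) (hx : x ∈ S)
    (hxy : x ≤ y) : f (min c y) + derivWithin f (Ioi c) c * (x - min c y) ≤ f x := by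
  rcases le_total c y with hcy | hyc
  · rw [min_eq_left hcy]
    exact hf.add_rightDeriv_mul_sub_le hc hx
  rw [min_eq_right hyc]
  rcases hxy.eq_or_lt with rfl | hxy
  · simp
  have := hf.slope_le_rightDeriv_of_mem_interior hx hc hxy hyc
  rw [slope_def_field, div_le_iff₀ (sub_pos.mpr hxy)] at this
  linarith

end ConvexOn

section eExp

variable {Ω : Type*} [MeasurableSpace Ω] {P : Measure Ω} {f g : Ω → ℝ}

theorem eExp_mono_ae (h : f ≤ᵐ[P] g) : eExp P f ≤ eExp P g :=
  EReal.sub_le_sub (EReal.coe_ennreal_le_coe_ennreal_iff.mpr <| lintegral_mono_ae <|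
      h.mono fun _ hω => ENNReal.ofReal_le_ofReal hω)
    (EReal.coe_ennreal_le_coe_ennreal_iff.mpr <| lintegral_mono_ae <|
      h.mono fun _ hω => ENNReal.ofReal_le_ofReal (neg_le_neg hω))

theorem eExp_eq_integral (hf : Integrable f P) : eExp P f = ((∫ ω, f ω ∂P : ℝ) : EReal) := by
  have hpos : ∫⁻ ω, ENNReal.ofReal (f ω) ∂P ≠ ⊤ :=
    (hf.lintegral_lt_top).ne
  have hneg : ∫⁻ ω, ENNReal.ofReal (-(f ω)) ∂P ≠ ⊤ :=
    (hf.neg.lintegral_lt_top).ne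
  rw [eExp, integral_eq_lintegral_pos_part_sub_lintegral_neg_part hf, EReal.coe_sub,
    ← EReal.coe_ennreal_toReal hpos, ← EReal.coe_ennreal_toReal hneg]

theorem eExp_comp_min_le_of_integral_eq {S : Set ℝ} {ψ : ℝ → ℝ} (hψ : ConvexOn ℝ S ψ) {c : ℝ}
    (hc : c ∈ interior S) {T τ : Ω → ℝ} (hτ : ∀ᵐ ω ∂P, τ ω ∈ S ∧ τ ω ≤ T ω)
    (hτint : Integrable τ P) (hTint : Integrable (fun ω => min c (T ω)) P)
    (hψint : Integrable (fun ω => ψ (min c (T ω))) P)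
    (hmean : ∫ ω, τ ω ∂P = ∫ ω, min c (T ω) ∂P) :
    eExp P (fun ω => ψ (min c (T ω))) ≤ eExp P (fun ω => ψ (τ ω)) := by
  set s := derivWithin ψ (Ioi c) c
  have hdiff : ∫ ω, s * (τ ω - min c (T ω)) ∂P = 0 := by
    rw [integral_const_mul, integral_sub hτint hTint, hmean, sub_self, mul_zero]
  have hsupport : (fun ω => ψ (min c (T ω)) + s * (τ ω - min c (T ω))) ≤ᵐ[P]
      fun ω => ψ (τ ω) :=
    hτ.mono fun ω ⟨hτS, hτT⟩ => hψ.add_rightDeriv_mul_sub_min_le hc hτS hτT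
  calc eExp P (fun ω => ψ (min c (T ω)))
      = eExp P (fun ω => ψ (min c (T ω)) + s * (τ ω - min c (T ω))) := by
        have hlin : Integrable (fun ω => s * (τ ω - min c (T ω))) P :=
          (hτint.sub hTint).const_mul s
        rw [eExp_eq_integral hψint, eExp_eq_integral (f := fun ω => _ + _) (hψint.add hlin),
          integral_add hψint hlin, hdiff, add_zero]
    _ ≤ eExp P (fun ω => ψ (τ ω)) := eExp_mono_ae hsupport

end eExp

section Truncation

variable {Ω : Type*} [MeasurableSpace Ω] {μ : Measure Ω} {X : Ω → ℝ}

theorem integral_min_eq_intervalIntegral_measureReal_lt [IsFiniteMeasure μ]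
    (hX : AEMeasurable X μ) (hX0 : 0 ≤ᵐ[μ] X) {t : ℝ} (ht : 0 ≤ t) :
    ∫ ω, min t (X ω) ∂μ = ∫ s in 0..t, μ.real {ω | s < X ω} := by
  have hint : Integrable (fun ω => min t (X ω)) μ :=
    Integrable.of_bound (aemeasurable_const.min hX).aestronglyMeasurable t <|
      hX0.mono fun ω h => by rw [Real.norm_of_nonneg (le_min ht h)]; exact min_le_left _ _
  have htail : ∀ s, μ.real {ω | s < min t (X ω)} =
      (Iio t).indicator (fun s => μ.real {ω | s < X ω}) s := by
    intro s
    by_cases hst : s < t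
    · simp [hst]
    · have hempty : ∀ ω, ¬ s < min t (X ω) := fun ω h => hst (h.trans_le (min_le_left _ _))
      simp [hst, hempty]
  rw [hint.integral_eq_integral_meas_lt (hX0.mono fun ω h => le_min ht h)]
  simp_rw [htail]
  rw [setIntegral_indicator measurableSet_Iio, Ioi_inter_Iio, ← integral_Ioc_eq_integral_Ioo,
    intervalIntegral.integral_of_le ht]

theorem tendsto_integral_min_atTop (hX : Integrable X μ) :
    Tendsto (fun t => ∫ ω, min t (X ω) ∂μ) atTop (𝓝 (∫ ω, X ω ∂μ)) := by
  refine tendsto_integral_filter_of_dominated_convergence (fun ω => |X ω|)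
    (Eventually.of_forall fun _ => (aemeasurable_const.min hX.aemeasurable).aestronglyMeasurable)
    ?_ hX.abs ?_
  · filter_upwards [eventually_ge_atTop 0] with t ht
    refine Eventually.of_forall fun ω => ?_
    rw [Real.norm_eq_abs, abs_le]
    constructor
    · exact le_min ((neg_nonpos.mpr (abs_nonneg _)).trans ht) (neg_abs_le _)
    · exact (min_le_right _ _).trans (le_abs_self _)
  · exact Eventually.of_forall fun ω =>
      tendsto_atTop_of_eventually_const (i₀ := X ω) fun t ht => min_eq_right ht

end Truncation

theorem ContinuousOn.integrable_comp_of_mem_Icc {Ω : Type*} [MeasurableSpace Ω] {μ : Measure Ω}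
    [IsFiniteMeasure μ] {ψ : ℝ → ℝ} {a b : ℝ} (hab : a ≤ b) (hψ : ContinuousOn ψ (Icc a b))
    {X : Ω → ℝ} (hX : AEMeasurable X μ) (hXab : ∀ᵐ ω ∂μ, X ω ∈ Icc a b) :
    Integrable (fun ω => ψ (X ω)) μ := by
  have hclamp : Continuous fun x => ψ (max a (min b x)) :=
    hψ.comp_continuous (by fun_prop) fun x => ⟨le_max_left _ _, max_le hab (min_le_left _ _)⟩
  obtain ⟨C, hC⟩ := isCompact_Icc.exists_bound_of_continuousOn hψ
  have hclamp_eq : (fun ω => ψ (max a (min b (X ω)))) =ᵐ[μ] fun ω => ψ (X ω) :=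
    hXab.mono fun ω hω => by dsimp only; rw [min_eq_right hω.2, max_eq_right hω.1]
  exact Integrable.of_bound ((hclamp.comp_aestronglyMeasurable hX.aestronglyMeasurable).congr
    hclamp_eq) C (hXab.mono fun ω hω => hC _ hω)

theorem Continuous.apply_sInf_setOf_le_eq {f : ℝ → ℝ} (hf : Continuous f) {a p : ℝ}
    (hne : {t | a ≤ t ∧ p ≤ f t}.Nonempty) (ha : a < sInf {t | a ≤ t ∧ p ≤ f t}) :
    f (sInf {t | a ≤ t ∧ p ≤ f t}) = p := by
  set c := sInf {t | a ≤ t ∧ p ≤ f t}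
  have hclosed : IsClosed {t | a ≤ t ∧ p ≤ f t} :=
    (isClosed_le continuous_const continuous_id).inter (isClosed_le continuous_const hf)
  have hc : p ≤ f c := (hclosed.csInf_mem hne ⟨a, fun t ht => ht.1⟩).2
  have hbelow : Ico a c ⊆ {t | f t ≤ p} := fun t ht => not_lt.mp fun hpt =>
    ht.2.not_ge (csInf_le ⟨a, fun t ht => ht.1⟩ ⟨ht.1, hpt.le⟩)
  have hc' : f c ≤ p := closure_minimal hbelow (isClosed_le hf continuous_const)
    (by rw [closure_Ico ha.ne]; exact ⟨ha.le, le_rfl⟩)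
  exact le_antisymm hc' hc

section Equilibrium

variable {Ω : Type*} [MeasurableSpace Ω] {μ : Measure Ω} {X : Ω → ℝ}

noncomputable def equilibriumCDF (μ : Measure Ω) (X : Ω → ℝ) (t : ℝ) : ℝ :=
  (∫ ω, X ω ∂μ)⁻¹ * ∫ s in 0..t, (1 - μ.real {ω | X ω ≤ s})

noncomputable def equilibriumQuantile (μ : Measure Ω) (X : Ω → ℝ) (p : ℝ) : ℝ :=
  sInf {t | 0 ≤ t ∧ p ≤ equilibriumCDF μ X t}

theorem continuous_equilibriumCDF [IsFiniteMeasure μ] : Continuous (equilibriumCDF μ X) := by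
  have hanti : Antitone fun s => 1 - μ.real {ω | X ω ≤ s} := fun x y hxy => by
    dsimp only
    gcongr
    exact measure_ne_top _ _
  exact continuous_const.mul
    (intervalIntegral.continuous_primitive (fun _ _ => hanti.intervalIntegrable) 0)

variable [IsProbabilityMeasure μ]

theorem equilibriumCDF_eq_mul_integral_min (hX : Measurable X) (hX0 : 0 ≤ᵐ[μ] X) {t : ℝ}
    (ht : 0 ≤ t) : equilibriumCDF μ X t = (∫ ω, X ω ∂μ)⁻¹ * ∫ ω, min t (X ω) ∂μ := by
  rw [equilibriumCDF, integral_min_eq_intervalIntegral_measureReal_lt hX.aemeasurable hX0 ht]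
  congr 1
  refine intervalIntegral.integral_congr fun s _ => ?_
  have hmeas : MeasurableSet {ω | X ω ≤ s} := hX measurableSet_Iic
  rw [← probReal_compl_eq_one_sub hmeas]
  simp only [compl_ofPred, not_le]

variable (hX : Measurable X) (hX0 : 0 ≤ᵐ[μ] X) (hXint : Integrable X μ) (hXpos : 0 < ∫ ω, X ω ∂μ)
include hX hX0 hXint hXpos

theorem nonempty_setOf_le_equilibriumCDF {p : ℝ} (hp : p < 1) :
    {t | 0 ≤ t ∧ p ≤ equilibriumCDF μ X t}.Nonempty := by
  have hlim : Tendsto (fun t => (∫ ω, X ω ∂μ)⁻¹ * ∫ ω, min t (X ω) ∂μ) atTop (𝓝 1) := by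
    simpa [inv_mul_cancel₀ hXpos.ne'] using
      (tendsto_integral_min_atTop hXint).const_mul (∫ ω, X ω ∂μ)⁻¹
  obtain ⟨t, ht, hpt⟩ := ((eventually_ge_atTop 0).and (hlim.eventually (lt_mem_nhds hp))).exists
  exact ⟨t, ht, by rw [equilibriumCDF_eq_mul_integral_min hX hX0 ht]; exact hpt.le⟩

theorem mul_integral_le_equilibriumQuantile {p : ℝ} (hp : p < 1) :
    p * ∫ ω, X ω ∂μ ≤ equilibriumQuantile μ X p := by
  refine le_csInf (nonempty_setOf_le_equilibriumCDF hX hX0 hXint hXpos hp) ?_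
  rintro t ⟨ht, hpt⟩
  have hmin_le : ∫ ω, min t (X ω) ∂μ ≤ t := by
    simpa using integral_mono ((integrable_const t).inf hXint) (integrable_const t)
      fun ω => min_le_left t (X ω)
  have h : p ≤ (∫ ω, X ω ∂μ)⁻¹ * t :=
    equilibriumCDF_eq_mul_integral_min hX hX0 ht ▸ hpt |>.trans <|
      mul_le_mul_of_nonneg_left hmin_le (inv_nonneg.mpr hXpos.le)
  rwa [inv_mul_eq_div, le_div_iff₀ hXpos] at h

theorem equilibriumQuantile_pos {p : ℝ} (hp : p ∈ Ioo 0 1) : 0 < equilibriumQuantile μ X p :=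
  (mul_pos hp.1 hXpos).trans_le (mul_integral_le_equilibriumQuantile hX hX0 hXint hXpos hp.2)

theorem integral_min_equilibriumQuantile {p : ℝ} (hp : p ∈ Ioo 0 1) :
    ∫ ω, min (equilibriumQuantile μ X p) (X ω) ∂μ = p * ∫ ω, X ω ∂μ := by
  have hpos := equilibriumQuantile_pos hX hX0 hXint hXpos hp
  have hcdf := continuous_equilibriumCDF.apply_sInf_setOf_le_eq
    (nonempty_setOf_le_equilibriumCDF hX hX0 hXint hXpos hp.2) hpos
  rw [← equilibriumQuantile, equilibriumCDF_eq_mul_integral_min hX hX0 hpos.le] at hcdf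
  field_simp at hcdf
  linarith

end Equilibrium

/-- Corollary (deterministic convex function): `τ_p = F_e^{-1}(p) ∧ T` minimizes
`E ψ(τ)` subject to `τ ∈ [0,T]` a.s. and `Eτ = p ET`. -/
theorem stmt10 {Ω : Type*} [MeasureSpace Ω] [IsProbabilityMeasure (ℙ : Measure Ω)]
    (ψ : ℝ → ℝ) (hψ : StrictConvexOn ℝ (Set.Ici (0 : ℝ)) ψ)
    (hψc : ContinuousOn ψ (Set.Ici (0 : ℝ)))
    (T : Ω → ℝ) (hTm : Measurable T) (hT0 : ∀ᵐ ω, 0 ≤ T ω)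
    (hTint : Integrable T) (hTpos : 0 < ∫ ω, T ω)
    (F : ℝ → ℝ) (hF : ∀ t, F t = (ℙ {ω | T ω ≤ t}).toReal)
    (Fe : ℝ → ℝ) (hFe : ∀ t, Fe t = (∫ ω, T ω)⁻¹ * ∫ s in (0 : ℝ)..t, (1 - F s))
    (p : ℝ) (hp : p ∈ Set.Ioo (0 : ℝ) 1)
    (c : ℝ) (hc : c = sInf {t : ℝ | 0 ≤ t ∧ p ≤ Fe t})
    (τp : Ω → ℝ) (hτp : ∀ ω, τp ω = min c (T ω)) :
    ∀ τ : Ω → ℝ, Measurable τ → (∀ᵐ ω, 0 ≤ τ ω ∧ τ ω ≤ T ω) →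
      Integrable τ → (∫ ω, τ ω) = p * ∫ ω, T ω →
      eExp ℙ (fun ω => ψ (τp ω)) ≤ eExp ℙ (fun ω => ψ (τ ω)) := by
  intro τ _ hτ hτint hτmean
  obtain rfl : Fe = equilibriumCDF ℙ T := funext fun t => by
    simp only [hFe, hF, equilibriumCDF]
    rfl
  obtain rfl : c = equilibriumQuantile ℙ T p := hc
  have hc_pos := equilibriumQuantile_pos hTm hT0 hTint hTpos hp
  have hmean_c := integral_min_equilibriumQuantile hTm hT0 hTint hTpos hp
  obtain rfl : τp = fun ω => min (equilibriumQuantile ℙ T p) (T ω) := funext hτp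
  refine eExp_comp_min_le_of_integral_eq hψ.convexOn (by rwa [interior_Ici]) hτ hτint
    ((integrable_const _).inf hTint) ?_ (hτmean.trans hmean_c.symm)
  exact (hψc.mono Icc_subset_Ici_self).integrable_comp_of_mem_Icc hc_pos.le
    (measurable_const.min hTm).aemeasurable
    (hT0.mono fun ω h => ⟨le_min hc_pos.le h, min_le_left _ _⟩)
end

section
/- Let f_1,…,f_n:[0,∞)→ℝ be convex functions with right derivatives ξ_i, let t_i∈[0,∞], a_i∈(0,∞), and α∈(0, Σ a_i t_i). Suppose λ∈ℝ is such that x_i^* := inf{t: ξ_i(t) ≥ a_i λ} ∧ t_i satisfies Σ_{i=1}^n a_i x_i^* = α. Then (x_1^*,…,x_n^*) minimizes Σ_{i=1}^n f_i(x_i) subject to x_i∈[0,t_i] for all i and Σ_{i=1}^n a_i x_i = α. -/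
open Set Filter Topology
open scoped ENNReal

/-!
`λ` is a Lagrange multiplier: `a_i λ` is a subgradient of `f_i` at `x*_i` relative to `[0, t_i]`,
because the right derivative `ξ_i` stays below `a_i λ` on `[0, x*_i)` and, when `x*_i < t_i`, is
at least `a_i λ` on `(x*_i, ∞)`. Summing `f_i(x*_i) + a_i λ (x_i - x*_i) ≤ f_i(x_i)` over `i`, the
multiplier terms cancel because `∑ a_i x_i = α = ∑ a_i x*_i`.
-/

namespace ConvexOn

variable {f ξ : ℝ → ℝ} (hf : ConvexOn ℝ (Ici 0) f)
  (hξ : ∀ s ∈ Ici (0 : ℝ), HasDerivWithinAt f (ξ s) (Ici s) s)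
include hf hξ

lemma slope_le_of_hasDerivWithinAt_Ici {u v : ℝ} (hu : 0 ≤ u) (huv : u < v) :
    slope f u v ≤ ξ v := by
  have hv : (0 : ℝ) ≤ v := hu.trans huv.le
  have hdv : HasDerivWithinAt f (ξ v) (Ioi v) v := (hξ v hv).mono Ioi_subset_Ici_self
  rw [← slope_comm]
  apply ge_of_tendsto <| (hasDerivWithinAt_iff_tendsto_slope' self_notMem_Ioi).mp hdv
  filter_upwards [self_mem_nhdsWithin] with w (hw : v < w)
  exact hf.slope_mono hv ⟨hu, huv.ne⟩ ⟨hv.trans hw.le, hw.ne'⟩ (huv.trans hw).le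

lemma monotoneOn_of_hasDerivWithinAt_Ici : MonotoneOn ξ (Ici 0) := by
  intro u (hu : 0 ≤ u) v _ huv
  rcases huv.eq_or_lt with rfl | huv
  · rfl
  exact (hf.le_slope_of_hasDerivWithinAt_Ioi hu (hu.trans huv.le) huv
    ((hξ u hu).mono Ioi_subset_Ici_self)).trans (hf.slope_le_of_hasDerivWithinAt_Ici hξ hu huv)

lemma add_mul_sub_le_of_le_rightDeriv {L c y : ℝ} (hc : 0 ≤ c) (hcy : c < y)
    (hL : ∀ s ∈ Ioo c y, L ≤ ξ s) : f c + L * (y - c) ≤ f y := by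
  have hlim : Tendsto (fun s => f s + L * (y - s)) (𝓝[>] c) (𝓝 (f c + L * (y - c))) :=
    (((hξ c hc).continuousWithinAt.mono Ioi_subset_Ici_self).add
      (by fun_prop : Continuous fun s => L * (y - s)).continuousWithinAt).tendsto
  refine le_of_tendsto hlim ?_
  filter_upwards [Ioo_mem_nhdsGT hcy] with s hs
  have hs0 : 0 ≤ s := hc.trans hs.1.le
  have hslope : L ≤ slope f s y := (hL s hs).trans <|
    hf.le_slope_of_hasDerivWithinAt_Ioi hs0 (hs0.trans hs.2.le) hs.2
      ((hξ s hs0).mono Ioi_subset_Ici_self)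
  rw [slope_def_field, le_div_iff₀ (sub_pos.2 hs.2)] at hslope
  linarith

lemma add_mul_sub_le_of_rightDeriv_le {L c y : ℝ} (hy : 0 ≤ y) (hyc : y < c)
    (hL : ∀ s ∈ Ioo y c, ξ s ≤ L) : f c + L * (y - c) ≤ f y := by
  have hfc : ContinuousAt f c := by
    refine hf.continuousOn_interior.continuousAt ?_
    rw [interior_Ici]
    exact Ioi_mem_nhds (hy.trans_lt hyc)
  have hlim : Tendsto (fun s => f s + L * (y - s)) (𝓝[<] c) (𝓝 (f c + L * (y - c))) :=
    ((hfc.add (by fun_prop : Continuous fun s => L * (y - s)).continuousAt).tendsto).mono_left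
      nhdsWithin_le_nhds
  refine le_of_tendsto hlim ?_
  filter_upwards [Ioo_mem_nhdsLT hyc] with s hs
  have hslope : slope f y s ≤ L := (hf.slope_le_of_hasDerivWithinAt_Ici hξ hy hs.1).trans (hL s hs)
  rw [slope_def_field, div_le_iff₀ (sub_pos.2 hs.1)] at hslope
  linarith

/-- The infimum is taken in `ℝ≥0∞` so that `inf ∅ = ∞`. -/
lemma add_mul_sub_le_of_eq_min_sInf {L : ℝ} {T X : ℝ≥0∞}
    (hX : X = min (sInf (ENNReal.ofReal '' {s : ℝ | 0 ≤ s ∧ L ≤ ξ s})) T) (hXtop : X ≠ ⊤)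
    {y : ℝ} (hy : 0 ≤ y) (hyT : ENNReal.ofReal y ≤ T) :
    f X.toReal + L * (y - X.toReal) ≤ f y := by
  set I := sInf (ENNReal.ofReal '' {s : ℝ | 0 ≤ s ∧ L ≤ ξ s})
  have hX0 : 0 ≤ X.toReal := ENNReal.toReal_nonneg
  have hle_of_mem : ∀ s, 0 ≤ s → L ≤ ξ s → X.toReal ≤ s := fun s hs hLs =>
    ENNReal.toReal_le_of_le_ofReal hs <|
      hX ▸ (min_le_left _ _).trans (sInf_le (mem_image_of_mem _ ⟨hs, hLs⟩))
  rcases lt_trichotomy y X.toReal with hyX | rfl | hXy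
  · refine hf.add_mul_sub_le_of_rightDeriv_le hξ hy hyX fun s hs => ?_
    by_contra! hLs
    exact (hle_of_mem s (hy.trans hs.1.le) hLs.le).not_gt hs.2
  · simp
  · refine hf.add_mul_sub_le_of_le_rightDeriv hξ hX0 hXy fun s hs => ?_
    have hs0 : 0 ≤ s := hX0.trans hs.1.le
    have hXs : X < ENNReal.ofReal s := (ENNReal.lt_ofReal_iff_toReal_lt hXtop).2 hs.1
    have hXT : X < T := hXs.trans_le ((ENNReal.ofReal_le_ofReal hs.2.le).trans hyT)
    have hXI : X = I := hX.trans <| min_eq_left <|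
      ((min_lt_iff.1 (hX ▸ hXT)).resolve_right (lt_irrefl T)).le
    have hIs : I < ENNReal.ofReal s := hXI ▸ hXs
    obtain ⟨_, ⟨r, ⟨hr0, hLr⟩, rfl⟩, hrs⟩ := sInf_lt_iff.1 hIs
    exact hLr.trans <| hf.monotoneOn_of_hasDerivWithinAt_Ici hξ hr0 hs0
      ((ENNReal.ofReal_lt_ofReal_iff_of_nonneg hr0).1 hrs).le

end ConvexOn

theorem stmt18_general (n : ℕ) (f : Fin n → ℝ → ℝ) (ξ : Fin n → ℝ → ℝ)
    (hconv : ∀ i, ConvexOn ℝ (Set.Ici (0 : ℝ)) (f i))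
    (hderiv : ∀ i, ∀ s ∈ Set.Ici (0 : ℝ), HasDerivWithinAt (f i) (ξ i s) (Set.Ici s) s)
    (t : Fin n → ℝ≥0∞) (a : Fin n → ℝ) (ha : ∀ i, 0 < a i)
    (α : ℝ) (hα0 : 0 < α)
    (lam : ℝ) (xstar : Fin n → ℝ≥0∞)
    (hxstar : ∀ i, xstar i =
      min (sInf (ENNReal.ofReal '' {s : ℝ | 0 ≤ s ∧ a i * lam ≤ ξ i s})) (t i))
    (hsum : (∑ i, ENNReal.ofReal (a i) * xstar i) = ENNReal.ofReal α) :
    ∀ x : Fin n → ℝ, (∀ i, 0 ≤ x i) → (∀ i, ENNReal.ofReal (x i) ≤ t i) →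
      (∑ i, a i * x i) = α →
      (∑ i, f i (xstar i).toReal) ≤ ∑ i, f i (x i) := by
  intro x hx0 hxt hxsum
  have hterm_ne_top : ∀ i, ENNReal.ofReal (a i) * xstar i ≠ ⊤ :=
    fun i => ENNReal.sum_ne_top.1 (hsum ▸ ENNReal.ofReal_ne_top) i (Finset.mem_univ i)
  have hxstar_ne_top : ∀ i, xstar i ≠ ⊤ := fun i h =>
    hterm_ne_top i (ENNReal.mul_eq_top.2 (.inl ⟨by simpa using ha i, h⟩))
  have hsum_real : ∑ i, a i * (xstar i).toReal = α := by
    have := congrArg ENNReal.toReal hsum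
    rw [ENNReal.toReal_sum fun i _ => hterm_ne_top i, ENNReal.toReal_ofReal hα0.le] at this
    simpa [ENNReal.toReal_mul, ENNReal.toReal_ofReal (ha _).le] using this
  have hsubgrad : ∀ i, f i (xstar i).toReal + a i * lam * (x i - (xstar i).toReal) ≤ f i (x i) :=
    fun i => (hconv i).add_mul_sub_le_of_eq_min_sInf (hderiv i) (hxstar i) (hxstar_ne_top i)
      (hx0 i) (hxt i)
  have hmultiplier : ∑ i, a i * lam * (x i - (xstar i).toReal) = 0 := by
    simp only [mul_sub, Finset.sum_sub_distrib, mul_right_comm _ lam, ← Finset.sum_mul, hxsum,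
      hsum_real, sub_self, zero_mul]
  have htotal := Finset.sum_le_sum fun i (_ : i ∈ Finset.univ) => hsubgrad i
  rwa [Finset.sum_add_distrib, hmultiplier, add_zero] at htotal

/-- Separable convex optimization with linear constraints: if
`x_i^* = inf{t : ξ_i(t) ≥ a_i λ} ∧ t_i` satisfies `Σ a_i x_i^* = α`, then it
minimizes `Σ f_i(x_i)` subject to `x_i ∈ [0, t_i]` and `Σ a_i x_i = α`. -/
theorem stmt18 (n : ℕ) (f : Fin n → ℝ → ℝ) (ξ : Fin n → ℝ → ℝ)
    (hconv : ∀ i, ConvexOn ℝ (Set.Ici (0 : ℝ)) (f i))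
    (hderiv : ∀ i, ∀ s ∈ Set.Ici (0 : ℝ), HasDerivWithinAt (f i) (ξ i s) (Set.Ici s) s)
    (t : Fin n → ℝ≥0∞) (a : Fin n → ℝ) (ha : ∀ i, 0 < a i)
    (α : ℝ) (hα0 : 0 < α)
    (hαt : ENNReal.ofReal α < ∑ i, ENNReal.ofReal (a i) * t i)
    (lam : ℝ) (xstar : Fin n → ℝ≥0∞)
    (hxstar : ∀ i, xstar i =
      min (sInf (ENNReal.ofReal '' {s : ℝ | 0 ≤ s ∧ a i * lam ≤ ξ i s})) (t i))
    (hsum : (∑ i, ENNReal.ofReal (a i) * xstar i) = ENNReal.ofReal α) :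
    ∀ x : Fin n → ℝ, (∀ i, 0 ≤ x i) → (∀ i, ENNReal.ofReal (x i) ≤ t i) →
      (∑ i, a i * x i) = α →
      (∑ i, f i (xstar i).toReal) ≤ ∑ i, f i (x i) :=
  stmt18_general n f ξ hconv hderiv t a ha α hα0 lam xstar hxstar hsum
end
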